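/- Let G be a connected graph, C a modulator to disjoint paths, P a shortest path in G with ecc_G(P) ≤ k, endpoints p_1, p_last, Ĉ = C ∪ {p_1, p_last}, δ(s) = d_G(s, V(P)) for s ∈ Ĉ, and d^δ(v) = min_{s∈Ĉ}(d_G(v,s)+δ(s)). If v is a vertex with d^δ(v) ≥ k+1 and u is a vertex on P nearest to v, then either u = v, or d_G(u,v) = k and u has a neighbor in Ĉ ∩ V(P). -/

import Mathlib

open SimpleGraph

/-- `C` is a modulator to disjoint paths: `G - C` is a vertex-disjoint union of paths,
i.e. acyclic with maximum degree at most 2. -/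
def IsPathsModulator {V : Type*} (G : SimpleGraph V) (C : Set V) : Prop :=
  (G.induce Cᶜ).IsAcyclic ∧ ∀ v : ↥Cᶜ, ((G.induce Cᶜ).neighborSet v).ncard ≤ 2

/-- distance from a vertex to a set of vertices -/
noncomputable def dset {V : Type*} (G : SimpleGraph V) (u : V) (S : Set V) : ℕ∞ :=
  ⨅ s ∈ S, G.edist u s

/-- eccentricity of a set of vertices -/
noncomputable def eccSet {V : Type*} (G : SimpleGraph V) (S : Set V) : ℕ∞ :=
  ⨆ u, dset G u S

/-!
Since `u` is nearest to `v` on `P`, `d(v, u) ≤ ecc(P) ≤ k`. A vertex `s ∈ Ĉ` gives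
`d^δ(v) ≤ d(v, s)` if `s` lies on `P` and `d^δ(v) ≤ d(v, s) + 1` if `s` is adjacent to `P`; as
`d^δ(v) > k`, the first bound already shows `u ∉ Ĉ`. If `u ≠ v`, the vertex `w` before `u` on a
geodesic from `v` is off `P` (as `u` is nearest) and off `C` (as `d(v, w) + 1 ≤ d(v, u) ≤ k`).
Being an inner vertex of `P`, `u` has two further neighbours on `P`; since `u` has degree at most
2 in `G - C`, one of them, `s`, lies in `C`, and `k < d^δ(v) ≤ d(v, s) ≤ d(v, u) + 1`.
-/

namespace SimpleGraph

variable {V : Type*} {G : SimpleGraph V}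

/-- The paper's `d^δ` with `δ(s) = d(s, S)`: the length of a shortest route from `v` to `S`
that passes through some vertex of `T`. -/
noncomputable def distVia (G : SimpleGraph V) (T S : Set V) (v : V) : ℕ∞ :=
  ⨅ s ∈ T, G.edist v s + dset G s S

lemma edist_le_edist_add_one_of_adj {u v w : V} (h : G.Adj u w) :
    G.edist v w ≤ G.edist v u + 1 :=
  edist_eq_one_iff_adj.mpr h ▸ SimpleGraph.edist_triangle

lemma exists_adj_edist_add_one_le {u v : V} (hne : v ≠ u) (h : G.edist v u ≠ ⊤) :
    ∃ w, G.Adj u w ∧ G.edist v w + 1 ≤ G.edist v u := by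
  obtain ⟨p, hp⟩ := exists_walk_of_edist_ne_top (edist_comm (G := G) ▸ h)
  cases p with
  | nil => exact absurd rfl hne
  | cons huw q =>
    refine ⟨_, huw, ?_⟩
    rw [edist_comm, SimpleGraph.edist_comm (u := v), ← hp, Walk.length_cons, Nat.cast_add_one]
    exact add_le_add q.edist_le le_rfl

lemma dset_le_edist {u x : V} {S : Set V} (hx : x ∈ S) : dset G u S ≤ G.edist u x :=
  iInf₂_le x hx

lemma dset_eq_zero_of_mem {u : V} {S : Set V} (hu : u ∈ S) : dset G u S = 0 :=
  nonpos_iff_eq_zero.mp ((dset_le_edist hu).trans_eq edist_self)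

lemma dset_le_eccSet (u : V) (S : Set V) : dset G u S ≤ eccSet G S :=
  le_iSup (fun x => dset G x S) u

lemma distVia_le {T S : Set V} {v s : V} (hs : s ∈ T) :
    distVia G T S v ≤ G.edist v s + dset G s S :=
  iInf₂_le s hs

lemma distVia_le_edist {T S : Set V} {v s : V} (hsT : s ∈ T) (hsS : s ∈ S) :
    distVia G T S v ≤ G.edist v s := by
  simpa [dset_eq_zero_of_mem hsS] using distVia_le (G := G) (S := S) (v := v) hsT

lemma distVia_le_edist_add_one {T S : Set V} {v s x : V} (hsT : s ∈ T) (hxS : x ∈ S)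
    (h : G.Adj s x) : distVia G T S v ≤ G.edist v s + 1 :=
  (distVia_le hsT).trans
    (add_le_add le_rfl ((dset_le_edist hxS).trans_eq (edist_eq_one_iff_adj.mpr h)))

lemma exists_adj_notMem_of_edist_eq_dset {S : Set V} {u v : V}
    (hnear : G.edist v u = dset G v S) (hne : v ≠ u) (h : G.edist v u ≠ ⊤) :
    ∃ w ∉ S, G.Adj u w ∧ G.edist v w + 1 ≤ G.edist v u := by
  obtain ⟨w, huw, hvw⟩ := exists_adj_edist_add_one_le hne h
  refine ⟨w, fun hw => ?_, huw, hvw⟩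
  have hwtop : G.edist v w ≠ ⊤ := ne_top_of_le_ne_top h (le_of_add_le_left hvw)
  exact ((ENat.add_one_le_iff hwtop).mp hvw).not_ge (hnear ▸ dset_le_edist hw)

lemma Walk.IsPath.exists_adj_adj_of_mem_support {a b u : V} {p : G.Walk a b} (hp : p.IsPath)
    (hu : u ∈ p.support) (ha : u ≠ a) (hb : u ≠ b) :
    ∃ x ∈ p.support, ∃ y ∈ p.support, x ≠ y ∧ G.Adj u x ∧ G.Adj u y := by
  obtain ⟨i, rfl, hi⟩ := Walk.mem_support_iff_exists_getVert.mp hu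
  have hi0 : i ≠ 0 := by rintro rfl; simp at ha
  have hil : i ≠ p.length := by rintro rfl; simp at hb
  refine ⟨p.getVert (i - 1), p.getVert_mem_support _, p.getVert (i + 1),
    p.getVert_mem_support _, fun h => ?_, ?_, p.adj_getVert_succ (by omega)⟩
  · have := hp.getVert_injOn (by simp only [Set.mem_ofPred_eq]; omega)
      (by simp only [Set.mem_ofPred_eq]; omega) h
    omega
  · simpa [Nat.sub_add_cancel (Nat.one_le_iff_ne_zero.mpr hi0)] using
      (p.adj_getVert_succ (i := i - 1) (by omega)).symm

/-- `u` has at most two neighbours in `G - C`. -/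
lemma IsPathsModulator.mem_or_mem_of_adj [Finite V] {C : Set V} (hC : IsPathsModulator G C)
    {u w x y : V} (hu : u ∉ C) (hw : w ∉ C) (hwx : w ≠ x) (hwy : w ≠ y) (hxy : x ≠ y)
    (huw : G.Adj u w) (hux : G.Adj u x) (huy : G.Adj u y) : x ∈ C ∨ y ∈ C := by
  by_contra! h
  obtain ⟨hx, hy⟩ := h
  have hsub :
      ({⟨w, hw⟩, ⟨x, hx⟩, ⟨y, hy⟩} : Set ↥Cᶜ) ⊆ (G.induce Cᶜ).neighborSet ⟨u, hu⟩ := by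
    rintro _ (rfl | rfl | rfl) <;> simpa
  have hcard : ({⟨w, hw⟩, ⟨x, hx⟩, ⟨y, hy⟩} : Set ↥Cᶜ).ncard = 3 :=
    Set.ncard_eq_three.mpr ⟨_, _, _, by simpa, by simpa, by simpa, rfl⟩
  have := Set.ncard_le_ncard hsub (Set.toFinite _)
  have := hC.2 ⟨u, hu⟩
  omega

end SimpleGraph

theorem stmt10_general {V : Type*} [Fintype V] (G : SimpleGraph V)
    (C : Set V) (hC : IsPathsModulator G C) (k : ℕ)
    {a b : V} (P : G.Walk a b) (hP : P.IsPath)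
    (hecc : eccSet G {x | x ∈ P.support} ≤ (k : ℕ∞))
    (v u : V) (hu : u ∈ P.support)
    (hnear : G.edist v u = dset G v {x | x ∈ P.support})
    (hv : ((k + 1 : ℕ) : ℕ∞) ≤
      ⨅ s ∈ C ∪ {a, b}, (G.edist v s + dset G s {x | x ∈ P.support})) :
    u = v ∨ (G.edist u v = (k : ℕ∞) ∧
      ∃ w ∈ (C ∪ {a, b}) ∩ {x | x ∈ P.support}, G.Adj u w) := by
  set S : Set V := {x | x ∈ P.support}
  change ((k + 1 : ℕ) : ℕ∞) ≤ distVia G (C ∪ {a, b}) S v at hv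
  have hkv : (k : ℕ∞) < distVia G (C ∪ {a, b}) S v := by
    rwa [Nat.cast_add_one, ENat.add_one_le_iff (ENat.natCast_ne_top k)] at hv
  have hvu : G.edist v u ≤ k := hnear ▸ (dset_le_eccSet v S).trans hecc
  have huĈ : u ∉ C ∪ {a, b} := fun h => (distVia_le_edist h hu).not_gt (hvu.trans_lt hkv)
  rcases eq_or_ne u v with huv | huv
  · exact Or.inl huv
  have hvu_top : G.edist v u ≠ ⊤ := ne_top_of_le_ne_top (ENat.natCast_ne_top k) hvu
  obtain ⟨w, hwP, huw, hvw⟩ := exists_adj_notMem_of_edist_eq_dset hnear huv.symm hvu_top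
  have hwC : w ∉ C := fun h =>
    (distVia_le_edist_add_one (Set.mem_union_left _ h) hu huw.symm).not_gt
      ((hvw.trans hvu).trans_lt hkv)
  have hk : ∀ s ∈ C, s ∈ P.support → G.Adj u s → G.edist u v = k := by
    intro s hsC hsP hus
    have : (k : ℕ∞) < G.edist v u + 1 := hkv.trans_le <|
      (distVia_le_edist (Set.mem_union_left _ hsC) hsP).trans (edist_le_edist_add_one_of_adj hus)
    exact SimpleGraph.edist_comm ▸ hvu.antisymm ((ENat.lt_add_one_iff hvu_top).mp this)
  obtain ⟨x, hxP, y, hyP, hxy, hux, huy⟩ := hP.exists_adj_adj_of_mem_support hu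
    (fun h => huĈ (by simp [h])) (fun h => huĈ (by simp [h]))
  right
  rcases hC.mem_or_mem_of_adj (fun h => huĈ (Or.inl h)) hwC (by rintro rfl; exact hwP hxP)
    (by rintro rfl; exact hwP hyP) hxy huw hux huy with hx | hy
  · exact ⟨hk x hx hxP hux, x, ⟨Or.inl hx, hxP⟩, hux⟩
  · exact ⟨hk y hy hyP huy, y, ⟨Or.inl hy, hyP⟩, huy⟩

/-- If `ecc_G(P) ≤ k`, `v` has `d^δ(v) ≥ k+1` and `u` is a vertex of `P` nearest
to `v`, then either `u = v`, or `d_G(u,v) = k` and `u` has a neighbor in `Ĉ ∩ V(P)`. -/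
theorem stmt10 {V : Type*} [Fintype V] (G : SimpleGraph V) (hG : G.Connected)
    (C : Set V) (hC : IsPathsModulator G C) (k : ℕ)
    {a b : V} (P : G.Walk a b) (hP : P.IsPath) (hs : P.length = G.dist a b)
    (hecc : eccSet G {x | x ∈ P.support} ≤ (k : ℕ∞))
    (v u : V) (hu : u ∈ P.support)
    (hnear : G.edist v u = dset G v {x | x ∈ P.support})
    (hv : ((k + 1 : ℕ) : ℕ∞) ≤
      ⨅ s ∈ C ∪ {a, b}, (G.edist v s + dset G s {x | x ∈ P.support})) :
    u = v ∨ (G.edist u v = (k : ℕ∞) ∧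
      ∃ w ∈ (C ∪ {a, b}) ∩ {x | x ∈ P.support}, G.Adj u w) :=
  stmt10_general G C hC k P hP hecc v u hu hnear hv
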